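/- Let η_n → η vaguely in M_p([0,1] × E), where η is a Radon point measure with η({0,1} × E) = 0 = η([0,1] × {±∞}). Let φ_+, φ_- ≥ 0 and define M(σ)(t) = ⋁_{t_i ≤ t} |x_i|(φ_+ 1_{{x_i>0}} + φ_- 1_{{x_i<0}}) for a point measure σ = Σ_i δ_{(t_i,x_i)} (with sup∅ = 0). Then for every t ∈ [0,1] with η({t} × E) = 0, M(η_n)(t) → M(η)(t) as n → ∞; consequently, since M(η_n) and M(η) are nondecreasing càdlàg functions, d_{M_2}(M(η_n), M(η)) → 0. -/

import Mathlib

open MeasureTheory Filter Topology Set ProbabilityTheory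
open scoped ENNReal NNReal

noncomputable section

namespace LinProc

/-! ### Càdlàg paths on `[0,1]` and Skorohod `M₂` distances -/

/-- A function `f : ℝ → ℝ` is càdlàg on `[0,1]`: right-continuous on `[0,1)` and
with left limits on `(0,1]`. -/
def IsCadlag (f : ℝ → ℝ) : Prop :=
  (∀ t ∈ Set.Ico (0:ℝ) 1, Filter.Tendsto f (nhdsWithin t (Set.Ioi t)) (nhds (f t))) ∧
  (∀ t ∈ Set.Ioc (0:ℝ) 1, ∃ l : ℝ, Filter.Tendsto f (nhdsWithin t (Set.Iio t)) (nhds l))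

/-- The left limit `f(t-)`, with the convention `f(0-) = f 0`. -/
def llim (f : ℝ → ℝ) (t : ℝ) : ℝ :=
  if t ≤ 0 then f 0 else Function.leftLim f t

/-- The metric `d(a,b) = |a₁-b₁| ∨ |a₂-b₂|` on `ℝ²`. -/
def dRect (a b : ℝ × ℝ) : ℝ := max |a.1 - b.1| |a.2 - b.2|

/-- The completed (thin) graph of `f` over `[0,1]`:
all points `(t, z)` with `t ∈ [0,1]` and `z` on the segment between `f(t-)` and `f(t)`. -/
def completedGraph (f : ℝ → ℝ) : Set (ℝ × ℝ) :=
  {p | p.1 ∈ Set.Icc (0:ℝ) 1 ∧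
    ∃ lam ∈ Set.Icc (0:ℝ) 1, p.2 = lam * llim f p.1 + (1 - lam) * f p.1}

/-- One-sided Hausdorff gap between completed graphs. -/
def graphGap (f g : ℝ → ℝ) : ℝ :=
  sSup ((fun a => sInf (dRect a '' completedGraph g)) '' completedGraph f)

/-- The Skorohod `M₂` metric on `D([0,1],ℝ)`: the Hausdorff distance (w.r.t. `dRect`)
between the completed graphs. -/
def dM2 (f g : ℝ → ℝ) : ℝ := max (graphGap f g) (graphGap g f)

/-- The metric `d_p` inducing the weak `M₂` (product) topology on `D([0,1],ℝ²)`,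
where an element of `D([0,1],ℝ²)` is recorded as a pair of real càdlàg functions. -/
def dProd (x y : (ℝ → ℝ) × (ℝ → ℝ)) : ℝ := max (dM2 x.1 y.1) (dM2 x.2 y.2)

/-! ### Convergence in distribution w.r.t. a distance function -/

/-- Convergence in distribution, along a filter `l`, of random elements of a space `S`
equipped with a distance function `d` : tested against all bounded functions `F : S → ℝ`
that are continuous with respect to `d` (measurability of the compositions is required
so that the integrals are meaningful). -/
def TendstoInDistr {ι Ω Ω' S : Type*} [MeasurableSpace Ω] [MeasurableSpace Ω']
    (l : Filter ι) (P : Measure Ω) (P' : Measure Ω') (d : S → S → ℝ)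
    (X : ι → Ω → S) (Y : Ω' → S) : Prop :=
  ∀ F : S → ℝ, (∃ C : ℝ, ∀ s, |F s| ≤ C) →
    (∀ s : S, ∀ ε > (0:ℝ), ∃ δ > (0:ℝ), ∀ s', d s s' < δ → |F s' - F s| < ε) →
    (∀ i, AEStronglyMeasurable (fun ω => F (X i ω)) P) →
    AEStronglyMeasurable (fun ω => F (Y ω)) P' →
    Filter.Tendsto (fun i => ∫ ω, F (X i ω) ∂P) l (𝓝 (∫ ω, F (Y ω) ∂P'))

/-! ### Regular variation -/

/-- `L` is slowly varying at `∞`. -/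
def SlowlyVarying (L : ℝ → ℝ) : Prop :=
  (∀ᶠ x in atTop, 0 < L x) ∧
    ∀ c > (0:ℝ), Filter.Tendsto (fun x => L (c * x) / L x) atTop (𝓝 1)

/-- `Z` has a regularly varying (two-sided) tail with index `α`:
`P(|Z| > x) = x^{-α} L(x)` for a slowly varying `L`. -/
def RegVarAbs {Ω : Type*} [MeasurableSpace Ω] (P : Measure Ω) (Z : Ω → ℝ) (α : ℝ) : Prop :=
  0 < α ∧ ∃ L : ℝ → ℝ, SlowlyVarying L ∧
    ∀ x > (0:ℝ), (P {ω | x < |Z ω|}).toReal = x ^ (-α) * L x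

/-- `Z` is regularly varying with index `α` and tail balance parameters `p`, `r`. -/
def RegVar {Ω : Type*} [MeasurableSpace Ω] (P : Measure Ω) (Z : Ω → ℝ)
    (α p r : ℝ) : Prop :=
  RegVarAbs P Z α ∧
    Filter.Tendsto
      (fun x : ℝ => (P {ω | x < Z ω}).toReal / (P {ω | x < |Z ω|}).toReal)
      atTop (𝓝 p) ∧
    Filter.Tendsto
      (fun x : ℝ => (P {ω | Z ω ≤ -x}).toReal / (P {ω | x < |Z ω|}).toReal)
      atTop (𝓝 r)

/-- The normalizing sequence `(aₙ)`: positive with `n P(|Z| > aₙ) → 1`. -/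
def NormSeq {Ω : Type*} [MeasurableSpace Ω] (P : Measure Ω) (Z : Ω → ℝ) (a : ℕ → ℝ) : Prop :=
  (∀ n, 0 < a n) ∧
    Filter.Tendsto (fun n : ℕ => (n : ℝ) * (P {ω | a n < |Z ω|}).toReal) atTop (𝓝 1)

/-- An i.i.d. family of real random variables. -/
def IID {Ω ι : Type*} [MeasurableSpace Ω] (P : Measure Ω) (Z : ι → Ω → ℝ) : Prop :=
  (∀ i, Measurable (Z i)) ∧
    ProbabilityTheory.iIndepFun Z P ∧
    ∀ i j, P.map (Z i) = P.map (Z j)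

/-- `Z` is symmetric: `Z` and `-Z` have the same law. -/
def Symmetric' {Ω : Type*} [MeasurableSpace Ω] (P : Measure Ω) (Z : Ω → ℝ) : Prop :=
  P.map Z = P.map (fun ω => -(Z ω))

/-! ### The limit measures -/

/-- The Lévy measure `μ(dx) = (p 1_{(0,∞)}(x) + r 1_{(-∞,0)}(x)) α |x|^{-α-1} dx`. -/
def levyMeasure (α p r : ℝ) : Measure ℝ :=
  volume.withDensity fun x =>
    ENNReal.ofReal ((if 0 < x then p else if x < 0 then r else 0) * α * |x| ^ (-α - 1))

/-- The exponent measure `ν(dx) = (φ₊^α p + φ₋^α r) α x^{-α-1} 1_{(0,∞)}(x) dx`. -/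
def extremalMeasure (α p r φp φm : ℝ) : Measure ℝ :=
  volume.withDensity fun x =>
    ENNReal.ofReal (if 0 < x then (φp ^ α * p + φm ^ α * r) * α * x ^ (-α - 1) else 0)

/-! ### Lévy processes and extremal processes on `[0,1]` -/

/-- `V` is a Lévy process on `[0,1]` with characteristic triple `(0, ν, b)`. -/
structure IsLevy {Ω : Type*} [MeasurableSpace Ω] (P : Measure Ω) (V : Ω → ℝ → ℝ)
    (ν : Measure ℝ) (b : ℝ) : Prop where
  meas : ∀ t, Measurable fun ω => V ω t
  start : ∀ᵐ ω ∂P, V ω 0 = 0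
  cadlag : ∀ᵐ ω ∂P, IsCadlag (V ω)
  indepIncr : ∀ (n : ℕ) (t : Fin (n+1) → ℝ), Monotone t →
    (∀ i, t i ∈ Set.Icc (0:ℝ) 1) →
    ProbabilityTheory.iIndepFun
      (fun i : Fin n => fun ω => V ω (t i.succ) - V ω (t i.castSucc)) P
  statIncr : ∀ s t : ℝ, 0 ≤ s → s ≤ t → t ≤ 1 →
    P.map (fun ω => V ω t - V ω s) = P.map (fun ω => V ω (t - s))
  charFun : ∀ t ∈ Set.Icc (0:ℝ) 1, ∀ z : ℝ,
    ∫ ω, Complex.exp (Complex.I * z * V ω t) ∂P =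
      Complex.exp (t * (Complex.I * b * z +
        ∫ x : ℝ, (Complex.exp (Complex.I * z * x) - 1 -
          Complex.I * z * x * Set.indicator (Set.Icc (-1:ℝ) 1) (fun _ => (1:ℂ)) x) ∂ν))

/-- `W` is an extremal process on `[0,1]` with exponent measure `ν`: its finite-dimensional
distributions are `P(W(t₁) ≤ x₁, …, W(t_k) ≤ x_k)
 = ∏ᵢ exp(-(tᵢ - tᵢ₋₁) ν(minⱼ≥ᵢ xⱼ, ∞))` for `0 < t₁ < ⋯ < t_k ≤ 1` and `xᵢ > 0`. -/
structure IsExtremal {Ω : Type*} [MeasurableSpace Ω] (P : Measure Ω) (W : Ω → ℝ → ℝ)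
    (ν : Measure ℝ) : Prop where
  meas : ∀ t, Measurable fun ω => W ω t
  fdd : ∀ (k : ℕ) (t x : Fin (k+1) → ℝ), StrictMono t → 0 < t 0 → t (Fin.last k) ≤ 1 →
    (∀ i, 0 < x i) →
    P {ω | ∀ i, W ω (t i) ≤ x i} =
      ENNReal.ofReal (Real.exp (-(∑ i : Fin (k+1),
        (t i - if h : i = 0 then 0 else t (Fin.castSucc (i.pred h))) *
          (ν (Set.Ioi (sInf (x '' {j | i ≤ j})))).toReal)))

/-! ### Poisson point processes on `[0,1] × (ℝ \ {0})` -/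

/-- The number of points of the family `pts` lying in `A` (in `ℝ≥0∞`). -/
def ptCount (pts : ℕ → ℝ × ℝ) (A : Set (ℝ × ℝ)) : ℝ≥0∞ :=
  ∑' i, A.indicator (fun _ => (1:ℝ≥0∞)) (pts i)

/-- `pts` is a Poisson point process with (σ-finite, atomless on single points) intensity
measure `m`: counts of disjoint sets are independent, and the count of any set of finite
intensity is Poisson distributed. -/
def IsPoissonPP {Ω : Type*} [MeasurableSpace Ω] (P : Measure Ω)
    (pts : Ω → ℕ → ℝ × ℝ) (m : Measure (ℝ × ℝ)) : Prop :=
  (∀ i, Measurable fun ω => pts ω i) ∧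
  (∀ A : Set (ℝ × ℝ), MeasurableSet A → m A ≠ ∞ → ∀ k : ℕ,
    P {ω | ptCount (pts ω) A = k} =
      ENNReal.ofReal (Real.exp (-(m A).toReal) * (m A).toReal ^ k / (Nat.factorial k))) ∧
  (∀ (n : ℕ) (A : Fin n → Set (ℝ × ℝ)), (∀ i, MeasurableSet (A i)) →
    Pairwise (Function.onFun Disjoint A) →
    ProbabilityTheory.iIndepFun
      (fun i ω => ptCount (pts ω) (A i)) P)

/-- The weight `|x| (φ₊ 1_{x>0} + φ₋ 1_{x<0})`. -/
def wt (φp φm : ℝ) (x : ℝ) : ℝ := |x| * (if 0 < x then φp else if x < 0 then φm else 0)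

/-- First component of the sum–maximum functional of a point family:
`β Σ_{tᵢ ≤ t} xᵢ 1_{u < |xᵢ|}`. -/
def ppSum (β u : ℝ) (pts : ℕ → ℝ × ℝ) (t : ℝ) : ℝ :=
  β * ∑' i, if (pts i).1 ≤ t ∧ u < |(pts i).2| then (pts i).2 else 0

/-- Second component of the sum–maximum functional:
`⋁_{tᵢ ≤ t} |xᵢ| (φ₊ 1_{xᵢ>0} + φ₋ 1_{xᵢ<0})`, with `sup ∅ = 0`. -/
def ppMax (φp φm : ℝ) (pts : ℕ → ℝ × ℝ) (t : ℝ) : ℝ :=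
  sSup (insert 0 {v | ∃ i, (pts i).1 ≤ t ∧ v = wt φp φm (pts i).2})

/-! ### Partial sum and partial maxima processes -/

/-- Partial-sum process `t ↦ (Σ_{i=1}^{⌊nt⌋} Y_i - ⌊nt⌋ b) / a`. -/
def sumProc (a b : ℝ) (Y : ℕ → ℝ) (n : ℕ) (t : ℝ) : ℝ :=
  ((∑ i ∈ Finset.range ⌊(n:ℝ) * t⌋₊, Y (i+1)) - (⌊(n:ℝ) * t⌋₊ : ℝ) * b) / a

/-- Partial-maxima process `t ↦ (⋁_{i=1}^{⌊nt⌋} Y_i) / a` (with value `0` for `⌊nt⌋ = 0`). -/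
def maxProc (a : ℝ) (Y : ℕ → ℝ) (n : ℕ) (t : ℝ) : ℝ :=
  if h : ⌊(n:ℝ) * t⌋₊ = 0 then 0 else
    ((Finset.range ⌊(n:ℝ) * t⌋₊).sup' (Finset.nonempty_range_iff.mpr h)
      (fun i => Y (i+1))) / a

/-- `φ₊ = max{φⱼ ∨ 0 : 0 ≤ j ≤ q}` for finitely many coefficients. -/
def phiPlusFin (q : ℕ) (φ : ℕ → ℝ) : ℝ :=
  (Finset.range (q+1)).sup' (Finset.nonempty_range_iff.mpr (Nat.succ_ne_zero q))
    fun j => max (φ j) 0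

/-- `φ₋ = max{-φⱼ ∨ 0 : 0 ≤ j ≤ q}` for finitely many coefficients. -/
def phiMinusFin (q : ℕ) (φ : ℕ → ℝ) : ℝ :=
  (Finset.range (q+1)).sup' (Finset.nonempty_range_iff.mpr (Nat.succ_ne_zero q))
    fun j => max (-φ j) 0

/-- `φ₊ = sup{φⱼ ∨ 0 : j ≥ 0}`. -/
def phiPlus (φ : ℕ → ℝ) : ℝ := ⨆ j : ℕ, max (φ j) 0

/-- `φ₋ = sup{-φⱼ ∨ 0 : j ≥ 0}`. -/
def phiMinus (φ : ℕ → ℝ) : ℝ := ⨆ j : ℕ, max (-φ j) 0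



/-! ### Radon point measures on `[0,1] × E`, `E = [-∞,∞] \ {0}` -/

/-- The point measure `Σᵢ δ_{pᵢ}` associated with a family of optional points in
`[0,1] × [-∞,∞]` (unused indices carry `none`). -/
def pmMeasure (pts : ℕ → Option (ℝ × EReal)) : Measure (ℝ × EReal) :=
  Measure.sum fun i => (pts i).elim 0 fun p => Measure.dirac p

/-- The points of `pts` lie in `[0,1] × E`, `E = [-∞,∞] \ {0}`. -/
def pmSupported (pts : ℕ → Option (ℝ × EReal)) : Prop :=
  ∀ i p, pts i = some p → p.1 ∈ Set.Icc (0:ℝ) 1 ∧ p.2 ≠ 0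

/-- Radon property: only finitely many points outside every neighbourhood `(-δ,δ)` of `0`. -/
def pmRadon (pts : ℕ → Option (ℝ × EReal)) : Prop :=
  ∀ δ : ℝ, 0 < δ →
    {i : ℕ | ∃ p, pts i = some p ∧ (p.2 ≤ -(δ:EReal) ∨ (δ:EReal) ≤ p.2)}.Finite

/-- Vague convergence of the point measures on `[0,1] × E`: convergence of integrals of
continuous functions vanishing on a neighbourhood of `{x = 0}` (such functions have
compactly contained support in `[0,1] × E`). -/
def VagueTendsto (pm : ℕ → (ℕ → Option (ℝ × EReal))) (pm0 : ℕ → Option (ℝ × EReal)) : Prop :=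
  ∀ f : ℝ × EReal → ℝ, Continuous f →
    (∃ δ : ℝ, 0 < δ ∧ ∀ p : ℝ × EReal, -(δ:EReal) < p.2 → p.2 < (δ:EReal) → f p = 0) →
    Filter.Tendsto (fun n => ∫ p, f p ∂(pmMeasure (pm n))) atTop
      (𝓝 (∫ p, f p ∂(pmMeasure pm0)))

/-- The weight `|x| (φ₊ 1_{x>0} + φ₋ 1_{x<0})` for `x ∈ [-∞,∞]` (real value; by convention
the weight of an infinite point is `0`). -/
def wtE (φp φm : ℝ) (x : EReal) : ℝ :=
  (if 0 < x then φp else if x < 0 then φm else 0) * |x.toReal|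

/-- `Φ^{(u)}` first component: `β Σ_{tᵢ ≤ t} xᵢ 1_{u < |xᵢ| < ∞}`. -/
def phiSumE (β u : ℝ) (pts : ℕ → Option (ℝ × EReal)) (t : ℝ) : ℝ :=
  β * ∑' i, (pts i).elim 0 fun p =>
    if p.1 ≤ t ∧ ((u:EReal) < p.2 ∨ p.2 < -(u:EReal)) ∧ p.2 ≠ ⊤ ∧ p.2 ≠ ⊥
    then p.2.toReal else 0

/-- `Φ^{(u)}` second component: `⋁_{tᵢ ≤ t} |xᵢ| (φ₊ 1_{xᵢ>0} + φ₋ 1_{xᵢ<0})`, `sup ∅ = 0`. -/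
def phiMaxE (φp φm : ℝ) (pts : ℕ → Option (ℝ × EReal)) (t : ℝ) : ℝ :=
  sSup (insert 0 {v | ∃ i p, pts i = some p ∧ p.1 ≤ t ∧ v = wtE φp φm p.2})

/-! ### The `M₁` oscillation function and the metric `d_{M₁}^*` -/

/-- The oscillation `ω(x,δ) = sup_{t} sup_{0∨(t-δ) ≤ t₁<t₂<t₃ ≤ (t+δ)∧1}
‖x(t₂) - [x(t₁),x(t₃)]‖`. -/
def osc (x : ℝ → ℝ) (δ : ℝ) : ℝ :=
  sSup (insert 0 {v | ∃ t ∈ Set.Icc (0:ℝ) 1, ∃ t₁ t₂ t₃ : ℝ,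
    max 0 (t - δ) ≤ t₁ ∧ t₁ < t₂ ∧ t₂ < t₃ ∧ t₃ ≤ min (t + δ) 1 ∧
    v = Metric.infDist (x t₂) (Set.uIcc (x t₁) (x t₃))})

/-- `ω̂(x,z) = ω(x, e^z)` for `z < 0` and `ω(x,1)` for `z ≥ 0`. -/
def oscHat (x : ℝ → ℝ) (z : ℝ) : ℝ :=
  if z < 0 then osc x (Real.exp z) else osc x 1

/-- The Lévy metric `λ(F₁,F₂) = inf{ε > 0 : F₂(y-ε) - ε ≤ F₁(y) ≤ F₂(y+ε) + ε ∀y}`. -/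
def levyMetric (F G : ℝ → ℝ) : ℝ :=
  sInf {ε : ℝ | 0 < ε ∧ ∀ y : ℝ, G (y - ε) - ε ≤ F y ∧ F y ≤ G (y + ε) + ε}


/-- The complete metric `d_{M₁}^*(x₁,x₂) = d_{M₂}(x₁,x₂) + λ(ω̂(x₁,·), ω̂(x₂,·))`,
topologically equivalent to the Skorohod `M₁` metric. -/
def dM1star (f g : ℝ → ℝ) : ℝ := dM2 f g + levyMetric (oscHat f) (oscHat g)

/-- The metric `d_p^*` : `M₂` on the first coordinate, `M₁` on the second. -/
def dProdStar (x y : (ℝ → ℝ) × (ℝ → ℝ)) : ℝ := max (dM2 x.1 y.1) (dM1star x.2 y.2)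

/-! Vague convergence is tested against Urysohn functions: to bound `M(ηₙ)(t)` from above they
separate the points of large weight at times `≤ t` from all points of `η`, and to bound it from
below they isolate one heavy point of `η` before `t`; the Radon property turns the integrals into
finite sums. `M(σ)` is nondecreasing and right-continuous, so convergence at the times carrying no
atom of `η` (a dense set, together with `0` and `1`) yields `M₂` convergence, by comparing the
completed graphs along a finite grid of such times. -/

/-- `wtE` is discontinuous at `±∞`, where it is `0`; this `[0,∞]`-valued version agrees with it
on finite points and is continuous on `[-∞,∞]`, so its level sets are closed or open. -/
def wtENNReal (φp φm : ℝ) (y : EReal) : ℝ≥0∞ :=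
  ENNReal.ofReal φp * y.toENNReal + ENNReal.ofReal φm * (-y).toENNReal

section Weight

variable {φp φm : ℝ}

lemma continuous_wtENNReal : Continuous (wtENNReal φp φm) :=
  ((ENNReal.continuous_const_mul ENNReal.ofReal_ne_top).comp EReal.continuous_toENNReal).add
    ((ENNReal.continuous_const_mul ENNReal.ofReal_ne_top).comp
      (EReal.continuous_toENNReal.comp continuous_neg))

lemma wtENNReal_eq_ofReal_wtE (hφp : 0 ≤ φp) (hφm : 0 ≤ φm) {y : EReal} (htop : y ≠ ⊤)
    (hbot : y ≠ ⊥) : wtENNReal φp φm y = ENNReal.ofReal (wtE φp φm y) := by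
  lift y to ℝ using ⟨htop, hbot⟩
  rcases lt_trichotomy y 0 with h | rfl | h
  · simp [wtENNReal, wtE, h, h.not_gt, abs_of_neg h, EReal.coe_neg', ← EReal.coe_neg,
      ENNReal.ofReal_of_nonpos h.le, ← ENNReal.ofReal_mul hφm]
  · simp [wtENNReal, wtE]
  · simp [wtENNReal, wtE, h, abs_of_pos h, ← EReal.coe_neg,
      ENNReal.ofReal_of_nonpos (neg_nonpos.2 h.le), ENNReal.ofReal_mul hφp]

lemma ofReal_wtE_le_wtENNReal (hφp : 0 ≤ φp) (hφm : 0 ≤ φm) (y : EReal) :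
    ENNReal.ofReal (wtE φp φm y) ≤ wtENNReal φp φm y := by
  induction y using EReal.rec with
  | bot => simp [wtE]
  | top => simp [wtE]
  | coe x => exact (wtENNReal_eq_ofReal_wtE hφp hφm (EReal.coe_ne_top x) (EReal.coe_ne_bot x)).ge

lemma exists_Ioo_subset_of_mem_nhds_zero {U : Set EReal} (hU : U ∈ 𝓝 (0 : EReal)) :
    ∃ δ : ℝ, 0 < δ ∧ Ioo (-(δ : EReal)) δ ⊆ U := by
  obtain ⟨δ, hδ, hball⟩ := Metric.mem_nhds_iff.1
    (continuous_coe_real_ereal.continuousAt.preimage_mem_nhds (by rwa [EReal.coe_zero]))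
  refine ⟨δ, hδ, fun y hy => ?_⟩
  induction y using EReal.rec with
  | bot => exact absurd hy.1 not_lt_bot
  | top => exact absurd hy.2 not_top_lt
  | coe x =>
    apply hball
    rw [Metric.mem_ball, Real.dist_eq, sub_zero, abs_lt]
    exact ⟨by exact_mod_cast hy.1, by exact_mod_cast hy.2⟩

lemma exists_Ioo_wtENNReal_lt {c : ℝ} (hc : 0 < c) :
    ∃ δ : ℝ, 0 < δ ∧ ∀ y ∈ Ioo (-(δ : EReal)) δ, wtENNReal φp φm y < ENNReal.ofReal c :=
  exists_Ioo_subset_of_mem_nhds_zero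
    ((isOpen_lt continuous_wtENNReal continuous_const).mem_nhds (by simpa [wtENNReal] using hc))

lemma finite_setOf_le_wtE (hφp : 0 ≤ φp) (hφm : 0 ≤ φm) {pts : ℕ → Option (ℝ × EReal)}
    (hrad : pmRadon pts) {c : ℝ} (hc : 0 < c) :
    {i | ∃ p, pts i = some p ∧ c ≤ wtE φp φm p.2}.Finite := by
  obtain ⟨δ, hδ, hsmall⟩ := exists_Ioo_wtENNReal_lt (φp := φp) (φm := φm) hc
  refine (hrad δ hδ).subset fun i ⟨p, hp, hcp⟩ => ⟨p, hp, ?_⟩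
  by_contra! h
  have := (ofReal_wtE_le_wtENNReal hφp hφm p.2).trans_lt (hsmall p.2 h)
  exact ((ENNReal.ofReal_lt_ofReal_iff hc).1 this).not_ge hcp

end Weight

lemma exists_Ioc_disjoint_of_finite {α : Type*} [TopologicalSpace α] [LinearOrder α]
    [OrderTopology α] [NoMaxOrder α] [DenselyOrdered α] {S : Set α} (hS : S.Finite) (s : α) :
    ∃ w > s, Disjoint (Ioc s w) S := by
  have hnhds : (S \ {s})ᶜ ∈ 𝓝[>] s :=
    nhdsWithin_le_nhds (hS.sdiff.isClosed.isOpen_compl.mem_nhds fun h => h.2 rfl)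
  obtain ⟨w, hw, hsub⟩ := mem_nhdsGT_iff_exists_Ioc_subset.1 hnhds
  exact ⟨w, hw, Set.disjoint_left.2 fun u hu huS => hsub hu ⟨huS, hu.1.ne'⟩⟩

section PhiMax

variable {φp φm : ℝ} {pts : ℕ → Option (ℝ × EReal)}

lemma bddAbove_phiMaxE_set (hφp : 0 ≤ φp) (hφm : 0 ≤ φm) (hrad : pmRadon pts) (t : ℝ) :
    BddAbove (insert 0 {v | ∃ i p, pts i = some p ∧ p.1 ≤ t ∧ v = wtE φp φm p.2}) := by
  refine ((bddAbove_Iic (a := 1)).union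
    ((finite_setOf_le_wtE hφp hφm hrad one_pos).image
      fun i => (pts i).elim 0 fun p => wtE φp φm p.2).bddAbove).mono ?_
  rintro v (rfl | ⟨i, p, hp, -, rfl⟩)
  · exact Or.inl (mem_Iic.2 zero_le_one)
  · by_cases h : 1 ≤ wtE φp φm p.2
    · exact Or.inr ⟨i, ⟨p, hp, h⟩, by simp [hp]⟩
    · exact Or.inl (not_le.1 h).le

lemma phiMaxE_nonneg (hφp : 0 ≤ φp) (hφm : 0 ≤ φm) (hrad : pmRadon pts) (t : ℝ) :
    0 ≤ phiMaxE φp φm pts t :=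
  le_csSup (bddAbove_phiMaxE_set hφp hφm hrad t) (mem_insert _ _)

lemma wtE_le_phiMaxE (hφp : 0 ≤ φp) (hφm : 0 ≤ φm) (hrad : pmRadon pts) {t : ℝ} {i : ℕ}
    {p : ℝ × EReal} (hp : pts i = some p) (hpt : p.1 ≤ t) :
    wtE φp φm p.2 ≤ phiMaxE φp φm pts t :=
  le_csSup (bddAbove_phiMaxE_set hφp hφm hrad t) (Or.inr ⟨i, p, hp, hpt, rfl⟩)

lemma phiMaxE_le {t c : ℝ} (hc : 0 ≤ c)
    (h : ∀ i p, pts i = some p → p.1 ≤ t → wtE φp φm p.2 ≤ c) :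
    phiMaxE φp φm pts t ≤ c :=
  Real.sSup_le (by rintro v (rfl | ⟨i, p, hp, hpt, rfl⟩) <;> [exact hc; exact h i p hp hpt]) hc

lemma exists_lt_wtE_of_lt_phiMaxE {t c : ℝ} (hc : 0 ≤ c) (h : c < phiMaxE φp φm pts t) :
    ∃ i p, pts i = some p ∧ p.1 ≤ t ∧ c < wtE φp φm p.2 := by
  obtain ⟨v, hv, hcv⟩ := exists_lt_of_lt_csSup ⟨0, mem_insert _ _⟩ h
  rcases hv with rfl | ⟨i, p, hp, hpt, rfl⟩
  · exact absurd hcv hc.not_gt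
  · exact ⟨i, p, hp, hpt, hcv⟩

lemma monotone_phiMaxE (hφp : 0 ≤ φp) (hφm : 0 ≤ φm) (hrad : pmRadon pts) :
    Monotone (phiMaxE φp φm pts) := fun _ t hst =>
  phiMaxE_le (phiMaxE_nonneg hφp hφm hrad t) fun _ _ hp hps =>
    wtE_le_phiMaxE hφp hφm hrad hp (hps.trans hst)

/-- Only finitely many points have weight above a level `z > M(s)`, so none of them occurs at
times in some interval `(s, w]`. -/
lemma continuousWithinAt_Ioi_phiMaxE (hφp : 0 ≤ φp) (hφm : 0 ≤ φm) (hrad : pmRadon pts)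
    (s : ℝ) : ContinuousWithinAt (phiMaxE φp φm pts) (Ioi s) s := by
  refine tendsto_order.2 ⟨fun a ha => eventually_nhdsWithin_of_forall fun u hu =>
    ha.trans_le (monotone_phiMaxE hφp hφm hrad (le_of_lt hu)), fun a ha => ?_⟩
  obtain ⟨z, hsz, hza⟩ := exists_between ha
  have hz : 0 < z := (phiMaxE_nonneg hφp hφm hrad s).trans_lt hsz
  obtain ⟨w, hsw, hdisj⟩ := exists_Ioc_disjoint_of_finite
    ((finite_setOf_le_wtE hφp hφm hrad hz).image fun i => (pts i).elim 0 Prod.fst) s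
  filter_upwards [Ioc_mem_nhdsGT hsw] with u hu
  refine (phiMaxE_le hz.le fun i p hp hpu => ?_).trans_lt hza
  by_contra! hzp
  rcases le_or_gt p.1 s with hps | hps
  · exact hsz.not_ge ((wtE_le_phiMaxE hφp hφm hrad hp hps).trans' hzp.le)
  · exact Set.disjoint_left.1 hdisj ⟨hps, hpu.trans hu.2⟩ ⟨i, ⟨p, hp, hzp.le⟩, by simp [hp]⟩

end PhiMax

section PointMeasure

variable {pts : ℕ → Option (ℝ × EReal)} {f : ℝ × EReal → ℝ}

lemma integrable_pmMeasure (hrad : pmRadon pts) (hf : Continuous f) {δ : ℝ} (hδ : 0 < δ)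
    (hvan : ∀ p : ℝ × EReal, p.2 ∈ Ioo (-(δ : EReal)) δ → f p = 0) :
    Integrable f (pmMeasure pts) := by
  refine ⟨hf.aestronglyMeasurable, ?_⟩
  have hterm : ∀ i, ∫⁻ p, ‖f p‖ₑ ∂((pts i).elim 0 fun p => Measure.dirac p) =
      (pts i).elim 0 fun p => ‖f p‖ₑ := fun i => by
    cases pts i <;> simp [lintegral_dirac]
  have hzero : ∀ i ∉ (hrad δ hδ).toFinset, ((pts i).elim 0 fun p => ‖f p‖ₑ) = 0 := by
    intro i hi
    cases hp : pts i with
    | none => rfl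
    | some p =>
      simp only [Finite.mem_toFinset, mem_ofPred_eq, hp, Option.some.injEq, exists_eq_left',
        not_or, not_le] at hi
      simp [hvan p ⟨hi.1, hi.2⟩]
  rw [HasFiniteIntegral, pmMeasure, lintegral_sum_measure, tsum_congr hterm, tsum_eq_sum hzero]
  exact ENNReal.sum_lt_top.2 fun i _ => by cases pts i <;> simp

lemma integral_pmMeasure_eq_zero (h : ∀ i p, pts i = some p → f p = 0) :
    ∫ p, f p ∂pmMeasure pts = 0 := by
  refine integral_eq_zero_of_ae ((Measure.ae_sum_iff).2 fun i => ?_)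
  cases hp : pts i with
  | none => simp
  | some p => simp [ae_dirac_eq, h i p hp]

lemma le_integral_pmMeasure (hint : Integrable f (pmMeasure pts)) (hf : 0 ≤ f) {i : ℕ}
    {p : ℝ × EReal} (hp : pts i = some p) : f p ≤ ∫ q, f q ∂pmMeasure pts := by
  have hle : Measure.dirac p ≤ pmMeasure pts := by
    simpa [hp, pmMeasure] using Measure.le_sum (fun i => (pts i).elim 0 fun p => Measure.dirac p) i
  simpa [integral_dirac] using integral_mono_measure hle (Eventually.of_forall hf) hint

end PointMeasure

section Vague

variable {pm : ℕ → ℕ → Option (ℝ × EReal)} {pm0 : ℕ → Option (ℝ × EReal)}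

lemma VagueTendsto.eventually_exists_mem (hvague : VagueTendsto pm pm0) (hrad0 : pmRadon pm0)
    {V : Set (ℝ × EReal)} (hV : IsOpen V) {δ : ℝ} (hδ : 0 < δ)
    (hVδ : ∀ q ∈ V, q.2 ∉ Ioo (-(δ : EReal)) δ) {i : ℕ} {p : ℝ × EReal} (hp : pm0 i = some p)
    (hpV : p ∈ V) : ∀ᶠ n in atTop, ∃ j q, pm n j = some q ∧ q ∈ V := by
  obtain ⟨f, hf0, hf1, hf01⟩ := exists_continuous_zero_one_of_isClosed hV.isClosed_compl
    isClosed_singleton (disjoint_singleton_right.2 (not_not.2 hpV))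
  have hvan : ∀ q : ℝ × EReal, q.2 ∈ Ioo (-(δ : EReal)) δ → f q = 0 :=
    fun q hq => hf0 fun hqV => hVδ q hqV hq
  have hpos : 0 < ∫ q, f q ∂pmMeasure pm0 :=
    calc (0 : ℝ) < f p := by rw [hf1 rfl]; exact one_pos
      _ ≤ _ := le_integral_pmMeasure (integrable_pmMeasure hrad0 f.continuous hδ hvan)
          (fun q => (hf01 q).1) hp
  filter_upwards [(hvague f f.continuous ⟨δ, hδ, fun q h1 h2 => hvan q ⟨h1, h2⟩⟩).eventually
    (lt_mem_nhds hpos)] with n hn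
  by_contra! hno
  exact hn.ne' (integral_pmMeasure_eq_zero fun j q hq => hf0 (hno j q hq))

lemma VagueTendsto.eventually_forall_not_mem (hvague : VagueTendsto pm pm0)
    (hrad : ∀ n, pmRadon (pm n)) {K C : Set (ℝ × EReal)} (hK : IsClosed K) (hC : IsClosed C)
    (hKC : Disjoint K C) {δ : ℝ} (hδ : 0 < δ)
    (hCδ : ∀ q : ℝ × EReal, q.2 ∈ Ioo (-(δ : EReal)) δ → q ∈ C)
    (h0 : ∀ i p, pm0 i = some p → p ∈ C) :
    ∀ᶠ n in atTop, ∀ j q, pm n j = some q → q ∉ K := by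
  obtain ⟨f, hf0, hf1, hf01⟩ := exists_continuous_zero_one_of_isClosed hC hK hKC.symm
  have hvan : ∀ q : ℝ × EReal, q.2 ∈ Ioo (-(δ : EReal)) δ → f q = 0 := fun q hq => hf0 (hCδ q hq)
  have hlim := hvague f f.continuous ⟨δ, hδ, fun q h1 h2 => hvan q ⟨h1, h2⟩⟩
  rw [integral_pmMeasure_eq_zero fun i p hp => hf0 (h0 i p hp)] at hlim
  filter_upwards [hlim.eventually (gt_mem_nhds one_pos)] with n hn j q hq hqK
  have := le_integral_pmMeasure (integrable_pmMeasure (hrad n) f.continuous hδ hvan)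
    (fun q => (hf01 q).1) hq
  rw [hf1 hqK] at this
  exact (this.trans_lt hn).false

end Vague

section Convergence

variable {φp φm : ℝ} {pm : ℕ → ℕ → Option (ℝ × EReal)} {pm0 : ℕ → Option (ℝ × EReal)}

lemma eventually_lt_phiMaxE (hφp : 0 ≤ φp) (hφm : 0 ≤ φm) (hvague : VagueTendsto pm pm0)
    (hrad : ∀ n, pmRadon (pm n)) (hrad0 : pmRadon pm0) {t z : ℝ} (hz : 0 < z)
    (hzt : z < phiMaxE φp φm pm0 t) (hatom : ∀ i p, pm0 i = some p → p.1 ≠ t) :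
    ∀ᶠ n in atTop, z < phiMaxE φp φm (pm n) t := by
  obtain ⟨i, p, hp, hpt, hzp⟩ := exists_lt_wtE_of_lt_phiMaxE hz.le hzt
  obtain ⟨δ, hδ, hsmall⟩ := exists_Ioo_wtENNReal_lt (φp := φp) (φm := φm) hz
  set V := Iio t ×ˢ {y | ENNReal.ofReal z < wtENNReal φp φm y ∧ y ∈ Ioo ⊥ ⊤}
  have hV : IsOpen V := isOpen_Iio.prod ((isOpen_lt continuous_const continuous_wtENNReal).inter isOpen_Ioo)
  have hpfin : p.2 ∈ Ioo ⊥ ⊤ := by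
    refine ⟨bot_lt_iff_ne_bot.2 fun h => ?_, lt_top_iff_ne_top.2 fun h => ?_⟩ <;>
      simp [h, wtE] at hzp <;> linarith
  have hpV : p ∈ V :=
    ⟨lt_of_le_of_ne hpt (hatom i p hp), ((ENNReal.ofReal_lt_ofReal_iff (hz.trans hzp)).2 hzp).trans_le
      (ofReal_wtE_le_wtENNReal hφp hφm p.2), hpfin⟩
  filter_upwards [hvague.eventually_exists_mem hrad0 hV hδ
    (fun q hq hqδ => (hsmall _ hqδ).not_gt hq.2.1) hp hpV] with n ⟨j, q, hq, hqt, hqz, hqfin⟩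
  rw [wtENNReal_eq_ofReal_wtE hφp hφm hqfin.2.ne hqfin.1.ne', ENNReal.ofReal_lt_ofReal_iff'] at hqz
  exact hqz.1.trans_le (wtE_le_phiMaxE hφp hφm (hrad n) hq (le_of_lt hqt))

lemma eventually_phiMaxE_lt (hφp : 0 ≤ φp) (hφm : 0 ≤ φm) (hvague : VagueTendsto pm pm0)
    (hrad : ∀ n, pmRadon (pm n)) (hrad0 : pmRadon pm0)
    (hfin : ∀ i p, pm0 i = some p → p.2 ≠ ⊤ ∧ p.2 ≠ ⊥) {t z : ℝ}
    (hz : phiMaxE φp φm pm0 t < z) : ∀ᶠ n in atTop, phiMaxE φp φm (pm n) t < z := by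
  obtain ⟨c', hAc', hc'z⟩ := exists_between hz
  obtain ⟨c, hc'c, hcz⟩ := exists_between hc'z
  have hc' : 0 < c' := (phiMaxE_nonneg hφp hφm hrad0 t).trans_lt hAc'
  obtain ⟨u, hu, htu⟩ := (((continuousWithinAt_Ioi_phiMaxE hφp hφm hrad0 t).eventually
    (gt_mem_nhds hAc')).and self_mem_nhdsWithin).exists
  obtain ⟨δ, hδ, hsmall⟩ := exists_Ioo_wtENNReal_lt (φp := φp) (φm := φm) hc'
  set K := Iic t ×ˢ {y | ENNReal.ofReal c ≤ wtENNReal φp φm y}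
  -- `C` carries all points of `η`, since `M(η) < c'` up to the time `u > t`.
  set C := Ici u ×ˢ univ ∪ univ ×ˢ {y | wtENNReal φp φm y ≤ ENNReal.ofReal c'}
  have hK : IsClosed K :=
    isClosed_Iic.prod (isClosed_le continuous_const continuous_wtENNReal)
  have hC : IsClosed C :=
    (isClosed_Ici.prod isClosed_univ).union
      (isClosed_univ.prod (isClosed_le continuous_wtENNReal continuous_const))
  have hKC : Disjoint K C := by
    refine Set.disjoint_left.2 fun q ⟨hqt, hqc⟩ hqC => hqC.elim (fun h => ?_) fun h => ?_
    · exact (hqt.trans_lt htu).not_ge h.1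
    · exact ((ENNReal.ofReal_lt_ofReal_iff (hc'.trans hc'c)).2 hc'c).not_ge (hqc.trans h.2)
  have h0 : ∀ i p, pm0 i = some p → p ∈ C := by
    intro i p hp
    rcases le_or_gt u p.1 with h | h
    · exact Or.inl ⟨h, trivial⟩
    · refine Or.inr ⟨trivial, ?_⟩
      rw [mem_ofPred_eq, wtENNReal_eq_ofReal_wtE hφp hφm (hfin i p hp).1 (hfin i p hp).2]
      exact ENNReal.ofReal_le_ofReal ((wtE_le_phiMaxE hφp hφm hrad0 hp h.le).trans hu.le)
  filter_upwards [hvague.eventually_forall_not_mem hrad hK hC hKC hδ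
    (fun q hq => Or.inr ⟨trivial, (hsmall _ hq).le⟩) h0] with n hn
  refine (phiMaxE_le (hc'.trans hc'c).le fun j q hq hqt => ?_).trans_lt hcz
  have hqc : wtENNReal φp φm q.2 < ENNReal.ofReal c := not_le.1 fun h => hn j q hq ⟨hqt, h⟩
  exact ((ENNReal.ofReal_lt_ofReal_iff (hc'.trans hc'c)).1
    ((ofReal_wtE_le_wtENNReal hφp hφm q.2).trans_lt hqc)).le

lemma tendsto_phiMaxE (hφp : 0 ≤ φp) (hφm : 0 ≤ φm) (hvague : VagueTendsto pm pm0)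
    (hrad : ∀ n, pmRadon (pm n)) (hrad0 : pmRadon pm0)
    (hfin : ∀ i p, pm0 i = some p → p.2 ≠ ⊤ ∧ p.2 ≠ ⊥) {t : ℝ}
    (hatom : ∀ i p, pm0 i = some p → p.1 ≠ t) :
    Tendsto (fun n => phiMaxE φp φm (pm n) t) atTop (𝓝 (phiMaxE φp φm pm0 t)) := by
  refine tendsto_order.2 ⟨fun z hz => ?_,
    fun z hz => eventually_phiMaxE_lt hφp hφm hvague hrad hrad0 hfin hz⟩
  rcases lt_or_ge z 0 with hz0 | hz0
  · exact Eventually.of_forall fun n => hz0.trans_le (phiMaxE_nonneg hφp hφm (hrad n) t)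
  · obtain ⟨z', hzz', hz'⟩ := exists_between hz
    exact (eventually_lt_phiMaxE hφp hφm hvague hrad hrad0 (hz0.trans_lt hzz') hz' hatom).mono
      fun n hn => hzz'.trans hn

end Convergence

section CompletedGraph

variable {f g : ℝ → ℝ}

lemma llim_zero (f : ℝ → ℝ) : llim f 0 = f 0 := if_pos le_rfl

lemma llim_le_self (hf : Monotone f) {s : ℝ} (hs : 0 ≤ s) : llim f s ≤ f s := by
  unfold llim
  split_ifs with h
  · rw [le_antisymm h hs]
  · exact hf.leftLim_le le_rfl

lemma mem_completedGraph_iff (hf : Monotone f) {a : ℝ × ℝ} :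
    a ∈ completedGraph f ↔ a.1 ∈ Icc (0 : ℝ) 1 ∧ a.2 ∈ Icc (llim f a.1) (f a.1) := by
  refine and_congr_right fun ha => ?_
  rw [Convex.mem_Icc (llim_le_self hf ha.1)]
  constructor
  · rintro ⟨lam, hlam, h⟩
    exact ⟨lam, 1 - lam, hlam.1, sub_nonneg.2 hlam.2, add_sub_cancel _ _, h.symm⟩
  · rintro ⟨x, y, hx, hy, hxy, h⟩
    obtain rfl : y = 1 - x := by linarith
    exact ⟨x, ⟨hx, by linarith⟩, h.symm⟩

lemma graphGap_nonneg : 0 ≤ graphGap f g :=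
  Real.sSup_nonneg <| by
    rintro _ ⟨a, -, rfl⟩
    exact Real.sInf_nonneg fun _ ⟨b, _, hb⟩ => hb ▸ le_max_of_le_left (abs_nonneg _)

lemma graphGap_le {r : ℝ} (hr : 0 ≤ r)
    (h : ∀ a ∈ completedGraph f, ∃ b ∈ completedGraph g, dRect a b ≤ r) : graphGap f g ≤ r := by
  refine Real.sSup_le ?_ hr
  rintro _ ⟨a, ha, rfl⟩
  obtain ⟨b, hb, hab⟩ := h a ha
  have hbdd : BddBelow (dRect a '' completedGraph g) :=
    ⟨0, by rintro _ ⟨c, -, rfl⟩; exact le_max_of_le_left (abs_nonneg _)⟩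
  exact (csInf_le hbdd ⟨b, hb, rfl⟩).trans hab

/-- The point of the completed graph sits at the supremum of the times where `g ≤ z`. -/
lemma exists_mem_completedGraph (hg : Monotone g)
    (hgrc : ∀ s, ContinuousWithinAt g (Ioi s) s) {s₁ s₂ z : ℝ} (h0 : 0 ≤ s₁) (h12 : s₁ ≤ s₂)
    (h21 : s₂ ≤ 1) (hz : z ∈ Icc (g s₁) (g s₂)) : ∃ s ∈ Icc s₁ s₂, (s, z) ∈ completedGraph g := by
  set S := {u | u ∈ Icc s₁ s₂ ∧ g u ≤ z}
  have hS : s₁ ∈ S := ⟨left_mem_Icc.2 h12, hz.1⟩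
  have hbdd : BddAbove S := ⟨s₂, fun u hu => hu.1.2⟩
  have hs : sSup S ∈ Icc s₁ s₂ := ⟨le_csSup hbdd hS, csSup_le ⟨_, hS⟩ fun u hu => hu.1.2⟩
  have hbelow : ∀ u < sSup S, g u ≤ z := fun u hu => by
    obtain ⟨v, hv, huv⟩ := exists_lt_of_lt_csSup ⟨_, hS⟩ hu
    exact (hg huv.le).trans hv.2
  refine ⟨sSup S, hs, (mem_completedGraph_iff hg).2
    ⟨⟨h0.trans hs.1, hs.2.trans h21⟩, ?_, ?_⟩⟩
  · unfold llim
    split_ifs with hs0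
    · obtain rfl : s₁ = 0 := le_antisymm (hs.1.trans hs0) h0
      exact hz.1
    · exact le_of_tendsto (hg.tendsto_leftLim _) (eventually_nhdsWithin_of_forall hbelow)
  · by_contra! hgs
    have hs2 : sSup S < s₂ := hs.2.lt_of_ne fun h => (hgs.trans_le (h ▸ hz.2)).false
    obtain ⟨u, hu, hus⟩ := (((hgrc _).eventually (gt_mem_nhds hgs)).and (Ioo_mem_nhdsGT hs2)).exists
    exact (le_csSup hbdd ⟨⟨hs.1.trans hus.1.le, hus.2.le⟩, hu.le⟩).not_gt hus.1

lemma exists_dRect_le_of_mem_completedGraph (hf : Monotone f) (hg : Monotone g)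
    (hgrc : ∀ s, ContinuousWithinAt g (Ioi s) s) {a : ℝ × ℝ} (ha : a ∈ completedGraph f)
    {s₁ s₂ r : ℝ} (h0 : 0 ≤ s₁) (h1 : s₁ < a.1) (h2 : a.1 ≤ s₂) (h21 : s₂ ≤ 1)
    (hmesh : s₂ - s₁ ≤ r) (hd₁ : |f s₁ - g s₁| ≤ r) (hd₂ : |f s₂ - g s₂| ≤ r) :
    ∃ b ∈ completedGraph g, dRect a b ≤ r := by
  obtain ⟨-, hl, hu⟩ := (mem_completedGraph_iff hf).1 ha
  have hlo : f s₁ ≤ a.2 := by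
    refine le_trans ?_ hl
    rw [llim, if_neg (h0.trans_lt h1).not_ge]
    exact hf.le_leftLim h1
  have hhi : a.2 ≤ f s₂ := hu.trans (hf h2)
  rw [abs_le] at hd₁ hd₂
  obtain ⟨s, hs, hsg⟩ := exists_mem_completedGraph hg hgrc h0 (h1.le.trans h2) h21
    (z := max (g s₁) (min a.2 (g s₂)))
    ⟨le_max_left _ _, max_le (hg (h1.le.trans h2)) (min_le_right _ _)⟩
  refine ⟨_, hsg, max_le ?_ (abs_le.2 ⟨?_, ?_⟩)⟩
  · exact abs_le.2 ⟨by linarith [hs.2], by linarith [hs.1]⟩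
  · linarith [max_le (show g s₁ ≤ a.2 + r by linarith)
      ((min_le_left a.2 (g s₂)).trans (show a.2 ≤ a.2 + r by linarith))]
  · linarith [(le_min (show a.2 - r ≤ a.2 by linarith) (show a.2 - r ≤ g s₂ by linarith)).trans
      (le_max_right (g s₁) _)]

lemma graphGap_le_of_mesh (hf : Monotone f) (hg : Monotone g)
    (hgrc : ∀ s, ContinuousWithinAt g (Ioi s) s) {T : Set ℝ} (hT : T ⊆ Icc 0 1) (hT0 : 0 ∈ T)
    {r : ℝ} (hmesh : ∀ τ ∈ Ioc (0 : ℝ) 1, ∃ s₁ ∈ T, ∃ s₂ ∈ T, s₁ < τ ∧ τ ≤ s₂ ∧ s₂ - s₁ ≤ r)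
    (hclose : ∀ s ∈ T, |f s - g s| ≤ r) : graphGap f g ≤ r := by
  have hr : 0 ≤ r := (abs_nonneg _).trans (hclose 0 hT0)
  refine graphGap_le hr fun a ha => ?_
  obtain ⟨ha1, hl, hu⟩ := (mem_completedGraph_iff hf).1 ha
  rcases ha1.1.eq_or_lt with h0 | hpos
  · refine ⟨(0, g 0), (mem_completedGraph_iff hg).2 ⟨left_mem_Icc.2 zero_le_one,
      (llim_zero g).le, le_rfl⟩, max_le (by simpa [← h0] using hr) ?_⟩
    rw [← h0, llim_zero] at hl
    rw [← h0] at hu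
    simpa [le_antisymm hu hl] using hclose 0 hT0
  · obtain ⟨s₁, h₁, s₂, h₂, h1, h2, hm⟩ := hmesh a.1 ⟨hpos, ha1.2⟩
    exact exists_dRect_le_of_mem_completedGraph hf hg hgrc ha (hT h₁).1 h1 h2 (hT h₂).2 hm
      (hclose s₁ h₁) (hclose s₂ h₂)

end CompletedGraph

/-- A finite `r/4`-net of `[0,1]` inside `G`, together with the endpoints, has consecutive gaps
at most `r`. -/
lemma exists_finset_mesh {G : Set ℝ} (hG : Dense G) {r : ℝ} (hr : 0 < r) :
    ∃ T : Finset ℝ, ↑T ⊆ Icc 0 1 ∩ insert 0 (insert 1 G) ∧ 0 ∈ T ∧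
      ∀ τ ∈ Ioc (0 : ℝ) 1, ∃ s₁ ∈ T, ∃ s₂ ∈ T, s₁ < τ ∧ τ ≤ s₂ ∧ s₂ - s₁ ≤ r := by
  have hnear : ∀ x ∈ Icc (0 : ℝ) 1, ∃ y ∈ G ∩ Icc 0 1, |x - y| < r / 4 := by
    intro x hx
    obtain ⟨y, hyG, hy⟩ := hG.exists_between (x := max (x - r / 4) 0) (y := min (x + r / 4) 1)
      (max_lt (lt_min (by linarith) (by linarith [hx.2])) (lt_min (by linarith [hx.1]) one_pos))
    obtain ⟨hy1, hy2⟩ := And.intro (max_lt_iff.1 hy.1) (lt_min_iff.1 hy.2)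
    exact ⟨y, ⟨hyG, hy1.2.le, hy2.2.le⟩, abs_lt.2 ⟨by linarith, by linarith⟩⟩
  choose! c hcG hc using hnear
  obtain ⟨t, ht, hcover⟩ := isCompact_Icc.elim_nhds_subcover (fun x => Metric.ball (c x) (r / 4))
    fun x hx => Metric.isOpen_ball.mem_nhds (by rw [Metric.mem_ball, Real.dist_eq]; exact hc x hx)
  have hnet : ∀ x ∈ Icc (0 : ℝ) 1, ∃ s ∈ t.image c, |x - s| < r / 4 := fun x hx => by
    obtain ⟨y, hyt, hxy⟩ := mem_iUnion₂.1 (hcover hx)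
    exact ⟨c y, Finset.mem_image_of_mem c hyt, by rwa [Metric.mem_ball, Real.dist_eq] at hxy⟩
  refine ⟨insert 0 (insert 1 (t.image c)), ?_, Finset.mem_insert_self _ _, fun τ hτ => ?_⟩
  · intro s hs
    simp only [Finset.coe_insert, Finset.coe_image, mem_insert_iff, mem_image] at hs
    rcases hs with rfl | rfl | ⟨y, hy, rfl⟩
    · exact ⟨left_mem_Icc.2 zero_le_one, Or.inl rfl⟩
    · exact ⟨right_mem_Icc.2 zero_le_one, Or.inr (Or.inl rfl)⟩
    · exact ⟨(hcG y (ht y hy)).2, Or.inr (Or.inr (hcG y (ht y hy)).1)⟩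
  obtain ⟨s₁, hs₁, h1, h1'⟩ : ∃ s₁ ∈ insert 0 (insert 1 (t.image c)), s₁ < τ ∧ τ - r / 2 ≤ s₁ := by
    by_cases hτ' : τ ≤ r / 2
    · exact ⟨0, Finset.mem_insert_self _ _, hτ.1, by linarith⟩
    · obtain ⟨s, hs, hxs⟩ := hnet (τ - r / 4) ⟨by linarith, by linarith [hτ.2]⟩
      rw [abs_lt] at hxs
      exact ⟨s, Finset.mem_insert_of_mem (Finset.mem_insert_of_mem hs), by linarith, by linarith⟩
  obtain ⟨s₂, hs₂, h2, h2'⟩ : ∃ s₂ ∈ insert 0 (insert 1 (t.image c)), τ ≤ s₂ ∧ s₂ ≤ τ + r / 2 := by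
    by_cases hτ' : 1 - r / 2 ≤ τ
    · exact ⟨1, Finset.mem_insert_of_mem (Finset.mem_insert_self _ _), hτ.2, by linarith⟩
    · obtain ⟨s, hs, hxs⟩ := hnet (τ + r / 4) ⟨by linarith [hτ.1], by linarith⟩
      rw [abs_lt] at hxs
      exact ⟨s, Finset.mem_insert_of_mem (Finset.mem_insert_of_mem hs), by linarith, by linarith⟩
  exact ⟨s₁, hs₁, s₂, hs₂, h1, h2, by linarith⟩

theorem tendsto_dM2_of_tendsto_of_dense {ι : Type*} {l : Filter ι} {F : ι → ℝ → ℝ} {f : ℝ → ℝ}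
    (hF : ∀ n, Monotone (F n)) (hf : Monotone f)
    (hFrc : ∀ n s, ContinuousWithinAt (F n) (Ioi s) s) (hfrc : ∀ s, ContinuousWithinAt f (Ioi s) s)
    {G : Set ℝ} (hG : Dense G)
    (hconv : ∀ s ∈ insert 0 (insert 1 G), Tendsto (fun n => F n s) l (𝓝 (f s))) :
    Tendsto (fun n => dM2 (F n) f) l (𝓝 0) := by
  refine tendsto_order.2 ⟨fun a ha => Eventually.of_forall fun n =>
    ha.trans_le (le_max_of_le_left graphGap_nonneg), fun ε hε => ?_⟩
  obtain ⟨T, hT, hT0, hmesh⟩ := exists_finset_mesh hG (half_pos hε)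
  have hev : ∀ᶠ n in l, ∀ s ∈ T, |F n s - f s| ≤ ε / 2 :=
    (eventually_all_finset T).2 fun s hs =>
      (Metric.tendsto_nhds.1 (hconv s (hT hs).2) _ (half_pos hε)).mono fun n hn => hn.le
  filter_upwards [hev] with n hn
  have h1 := graphGap_le_of_mesh (hF n) hf hfrc (T := T) (fun s hs => (hT hs).1) hT0 hmesh hn
  have h2 := graphGap_le_of_mesh hf (hF n) (hFrc n) (T := T) (fun s hs => (hT hs).1) hT0 hmesh
    fun s hs => abs_sub_comm (F n s) (f s) ▸ hn s hs
  exact (max_le h1 h2).trans_lt (half_lt_self hε)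

lemma dense_setOf_forall_ne_fst (pts : ℕ → Option (ℝ × EReal)) :
    Dense {s : ℝ | ∀ i p, pts i = some p → p.1 ≠ s} := by
  refine ((countable_range fun i => (pts i).elim 0 Prod.fst).dense_compl ℝ).mono ?_
  rintro s hs i p hp rfl
  exact hs ⟨i, by simp [hp]⟩

theorem max_functional_convergence_general
    (φp φm : ℝ) (hφp : 0 ≤ φp) (hφm : 0 ≤ φm)
    (pm : ℕ → ℕ → Option (ℝ × EReal)) (pm0 : ℕ → Option (ℝ × EReal))
    (hrad : ∀ n, pmRadon (pm n)) (hrad0 : pmRadon pm0)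
    (hη : ∀ i p, pm0 i = some p → p.1 ≠ 0 ∧ p.1 ≠ 1 ∧ p.2 ≠ ⊤ ∧ p.2 ≠ ⊥)
    (hvague : VagueTendsto pm pm0) :
    (∀ t ∈ Set.Icc (0:ℝ) 1, (∀ i p, pm0 i = some p → p.1 ≠ t) →
      Filter.Tendsto (fun n => phiMaxE φp φm (pm n) t) atTop
        (𝓝 (phiMaxE φp φm pm0 t))) ∧
    Filter.Tendsto (fun n => dM2 (phiMaxE φp φm (pm n)) (phiMaxE φp φm pm0)) atTop
      (𝓝 0) := by
  have hconv : ∀ t, (∀ i p, pm0 i = some p → p.1 ≠ t) →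
      Tendsto (fun n => phiMaxE φp φm (pm n) t) atTop (𝓝 (phiMaxE φp φm pm0 t)) :=
    fun t hatom => tendsto_phiMaxE hφp hφm hvague hrad hrad0 (fun i p hp => (hη i p hp).2.2) hatom
  refine ⟨fun t _ => hconv t, tendsto_dM2_of_tendsto_of_dense
    (fun n => monotone_phiMaxE hφp hφm (hrad n)) (monotone_phiMaxE hφp hφm hrad0)
    (fun n => continuousWithinAt_Ioi_phiMaxE hφp hφm (hrad n))
    (continuousWithinAt_Ioi_phiMaxE hφp hφm hrad0) (dense_setOf_forall_ne_fst pm0) ?_⟩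
  rintro s (rfl | rfl | hs)
  · exact hconv 0 fun i p hp => (hη i p hp).1
  · exact hconv 1 fun i p hp => (hη i p hp).2.1
  · exact hconv s hs

/-- If `ηₙ → η` vaguely in `M_p([0,1] × E)`, with `η` having no atoms on
`{0,1} × E` nor on `[0,1] × {±∞}`, then the running-maximum functional
`M(σ)(t) = ⋁_{tᵢ ≤ t}|xᵢ|(φ₊1_{xᵢ>0} + φ₋1_{xᵢ<0})` satisfies `M(ηₙ)(t) → M(η)(t)` at
every `t ∈ [0,1]` with `η({t} × E) = 0`, and consequently `d_{M₂}(M(ηₙ), M(η)) → 0`. -/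
theorem max_functional_convergence
    (φp φm : ℝ) (hφp : 0 ≤ φp) (hφm : 0 ≤ φm)
    (pm : ℕ → ℕ → Option (ℝ × EReal)) (pm0 : ℕ → Option (ℝ × EReal))
    (hsupp : ∀ n, pmSupported (pm n)) (hsupp0 : pmSupported pm0)
    (hrad : ∀ n, pmRadon (pm n)) (hrad0 : pmRadon pm0)
    (hη : ∀ i p, pm0 i = some p → p.1 ≠ 0 ∧ p.1 ≠ 1 ∧ p.2 ≠ ⊤ ∧ p.2 ≠ ⊥)
    (hvague : VagueTendsto pm pm0) :
    (∀ t ∈ Set.Icc (0:ℝ) 1, (∀ i p, pm0 i = some p → p.1 ≠ t) →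
      Filter.Tendsto (fun n => phiMaxE φp φm (pm n) t) atTop
        (𝓝 (phiMaxE φp φm pm0 t))) ∧
    Filter.Tendsto (fun n => dM2 (phiMaxE φp φm (pm n)) (phiMaxE φp φm pm0)) atTop
      (𝓝 0) :=
  max_functional_convergence_general φp φm hφp hφm pm pm0 hrad hrad0 hη hvague

end LinProc
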